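/- arXiv:1808.08394 — 2 statements merged into one kernel-verified Lean document; each statement's English description precedes it below -/
import Mathlib

section
/- Let H be a transcendental entire function with H(−z) = −H(z) for all z, H′(0) ≠ 0, and such that the entire function z ↦ H(sin z) has finite order. For a ∈ ℂ put H_a(z) := cos z · (H(sin z) + 2a). Then there exists an at most countable set E ⊂ ℂ such that for every a ∈ ℂ \ E, every c ∈ ℂ, and any two points z₁, z₂ with H_a(z₁) = c, H_a′(z₁) = 0, H_a(z₂) = c, and H_a′(z₂) = 0, one has cos z₁ = cos z₂. -/
/-!
Off the zeros of `sin`, `z` is a critical point of `H_a` exactly when `a = M z` for an explicit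
function `M` analytic there, and the critical value is then `V z := H_{M z}(z)`. Differentiating
in `z` and `a` separately gives the envelope identity `V' = 2 cos · M'`. The exceptional set
consists of the critical values of `M` (countable, since analytic functions are locally constant
or have isolated critical points) and of the values `M z₁` at pairs with `M z₁ = M z₂`,
`V z₁ = V z₂`, `M' z₁ M' z₂ ≠ 0`, `cos z₁ ≠ cos z₂`. At such a pair the Jacobian of
`(z₁, z₂) ↦ (M z₁ - M z₂, V z₁ - V z₂)` is `2 M' z₁ M' z₂ (cos z₂ - cos z₁) ≠ 0`, so by the inverse
function theorem these pairs are isolated, hence countably many.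
-/

open Complex Set Topology Filter

theorem Set.Countable.image_of_forall_eventually_eq {X Y : Type*} [TopologicalSpace X]
    [SecondCountableTopology X] {S : Set X} {f : X → Y}
    (h : ∀ x ∈ S, ∀ᶠ y in 𝓝[S] x, f y = f x) : (f '' S).Countable := by
  obtain ⟨t, -, htc, hcover⟩ := TopologicalSpace.countable_cover_nhdsWithin h
  refine (htc.image f).mono ?_
  rintro _ ⟨y, hy, rfl⟩
  obtain ⟨x, hxt, hyx⟩ := mem_iUnion₂.mp (hcover hy)
  exact ⟨x, hxt, hyx.symm⟩

theorem Set.Countable.of_forall_eventually_eq {X : Type*} [TopologicalSpace X]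
    [SecondCountableTopology X] {S : Set X} (h : ∀ x ∈ S, ∀ᶠ y in 𝓝[S] x, y = x) :
    S.Countable := by
  simpa using Set.Countable.image_of_forall_eventually_eq (f := id) h

theorem countable_image_setOf_deriv_eq_zero {𝕜 : Type*} [RCLike 𝕜] {f : 𝕜 → 𝕜} {U : Set 𝕜}
    (hU : IsOpen U) (hf : AnalyticOnNhd 𝕜 f U) : (f '' {z ∈ U | deriv f z = 0}).Countable := by
  refine Set.Countable.image_of_forall_eventually_eq fun z ⟨hzU, hz⟩ => ?_
  rcases (hf.deriv z hzU).eventually_eq_zero_or_eventually_ne_zero with hzero | hne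
  · obtain ⟨ε, hε, hball⟩ := Metric.eventually_nhds_iff_ball.mp (hzero.and (hU.eventually_mem hzU))
    have hconst : ∀ y ∈ Metric.ball z ε, f y = f z := fun y hy =>
      Metric.isOpen_ball.is_const_of_deriv_eq_zero (convex_ball z ε).isPreconnected
        (fun w hw => (hf w (hball w hw).2).differentiableWithinAt) (fun w hw => (hball w hw).1)
        hy (Metric.mem_ball_self hε)
    exact eventually_nhdsWithin_of_eventually_nhds
      (eventually_of_mem (Metric.ball_mem_nhds z hε) hconst)
  · filter_upwards [eventually_nhdsWithin_of_eventually_nhds (eventually_nhdsWithin_iff.mp hne),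
      self_mem_nhdsWithin] with y hy hyS
    by_contra hyz
    exact hy (ne_of_apply_ne f hyz) hyS.2

theorem Set.Countable.of_hasStrictFDerivAt_injective {𝕜 E : Type*} [RCLike 𝕜]
    [NormedAddCommGroup E] [NormedSpace 𝕜 E] [FiniteDimensional 𝕜 E]
    {Θ : E → E} {Θ' : E → E →L[𝕜] E} {S : Set E} {c : E}
    (hΘ : ∀ x ∈ S, HasStrictFDerivAt Θ (Θ' x) x) (hinj : ∀ x ∈ S, Function.Injective (Θ' x))
    (hS : S ⊆ Θ ⁻¹' {c}) : S.Countable := by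
  have := FiniteDimensional.proper_rclike 𝕜 E
  refine Set.Countable.of_forall_eventually_eq fun x hx => ?_
  let e : E ≃L[𝕜] E :=
    (LinearEquiv.ofInjectiveEndo (Θ' x : E →ₗ[𝕜] E) (hinj x hx)).toContinuousLinearEquiv
  have he : HasStrictFDerivAt Θ (e : E →L[𝕜] E) x := hΘ x hx
  filter_upwards [eventually_nhdsWithin_of_eventually_nhds he.eventually_left_inverse,
    self_mem_nhdsWithin] with y hy hyS
  rw [← hy, hS hyS, ← hS hx, he.eventually_left_inverse.self_of_nhds]

theorem countable_setOf_eq_eq_of_mul_ne_mul {𝕜 : Type*} [RCLike 𝕜] {f g f' g' : 𝕜 → 𝕜}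
    {U : Set 𝕜} (hf : ∀ x ∈ U, HasStrictDerivAt f (f' x) x)
    (hg : ∀ x ∈ U, HasStrictDerivAt g (g' x) x) :
    {p : 𝕜 × 𝕜 | p.1 ∈ U ∧ p.2 ∈ U ∧ f p.1 = f p.2 ∧ g p.1 = g p.2 ∧
      f' p.1 * g' p.2 ≠ f' p.2 * g' p.1}.Countable := by
  let π₁ := ContinuousLinearMap.fst 𝕜 𝕜 𝕜
  let π₂ := ContinuousLinearMap.snd 𝕜 𝕜 𝕜
  refine Set.Countable.of_hasStrictFDerivAt_injective (c := 0)
    (Θ := fun q => (f q.1 - f q.2, g q.1 - g q.2))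
    (Θ' := fun p => (f' p.1 • π₁ - f' p.2 • π₂).prod (g' p.1 • π₁ - g' p.2 • π₂)) ?_ ?_ ?_
  · rintro p ⟨h₁, h₂, -⟩
    exact (((hf _ h₁).comp_hasStrictFDerivAt p hasStrictFDerivAt_fst).sub
      ((hf _ h₂).comp_hasStrictFDerivAt p hasStrictFDerivAt_snd)).prodMk
      (((hg _ h₁).comp_hasStrictFDerivAt p hasStrictFDerivAt_fst).sub
      ((hg _ h₂).comp_hasStrictFDerivAt p hasStrictFDerivAt_snd))
  · rintro p ⟨-, -, -, -, hdet⟩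
    rw [injective_iff_map_eq_zero]
    rintro ⟨x, y⟩ h
    simp only [π₁, π₂, ContinuousLinearMap.prod_apply, ContinuousLinearMap.coe_fst',
      ContinuousLinearMap.coe_snd', sub_apply, smul_apply, Prod.mk_eq_zero, smul_eq_mul] at h
    have hdet' : f' p.1 * g' p.2 - f' p.2 * g' p.1 ≠ 0 := sub_ne_zero.mpr hdet
    have hx : (f' p.1 * g' p.2 - f' p.2 * g' p.1) * x = 0 := by
      linear_combination g' p.2 * h.1 - f' p.2 * h.2
    have hy : (f' p.1 * g' p.2 - f' p.2 * g' p.1) * y = 0 := by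
      linear_combination g' p.1 * h.1 - f' p.1 * h.2
    exact Prod.ext ((mul_eq_zero.mp hx).resolve_left hdet') ((mul_eq_zero.mp hy).resolve_left hdet')
  · rintro p ⟨-, -, h₁, h₂, -⟩
    simp [h₁, h₂]

noncomputable section

/-- The function `H_a`. -/
def cosFamily (H : ℂ → ℂ) (a z : ℂ) : ℂ := cos z * (H (sin z) + 2 * a)

/-- Off the zeros of `sin`, `z` is a critical point of `cosFamily H a` exactly when
`critParam H z = a` (at the zeros of `sin` the division returns the junk value `0`). -/
def critParam (H : ℂ → ℂ) (z : ℂ) : ℂ :=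
  (cos z ^ 2 * deriv H (sin z) - sin z * H (sin z)) / (2 * sin z)

def critValue (H : ℂ → ℂ) (z : ℂ) : ℂ := cosFamily H (critParam H z) z

variable {H : ℂ → ℂ}

theorem hasDerivAt_cosFamily (hH : Differentiable ℂ H) (a z : ℂ) :
    HasDerivAt (cosFamily H a)
      (cos z ^ 2 * deriv H (sin z) - sin z * H (sin z) - 2 * a * sin z) z :=
  ((hasDerivAt_cos z).mul
    (((hH _).hasDerivAt.comp z (hasDerivAt_sin z)).add_const (2 * a))).congr_deriv
    (by simp only [Function.comp_apply]; ring)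

theorem sin_ne_zero_and_critParam_eq (hH : Differentiable ℂ H) (hd0 : deriv H 0 ≠ 0) {a z : ℂ}
    (h : deriv (cosFamily H a) z = 0) : sin z ≠ 0 ∧ critParam H z = a := by
  rw [(hasDerivAt_cosFamily hH a z).deriv] at h
  have hs : sin z ≠ 0 := by
    intro h0
    have hcos : cos z ^ 2 = 1 := by linear_combination sin_sq_add_cos_sq z - sin z * h0
    rw [h0, hcos] at h
    exact hd0 (by simpa using h)
  refine ⟨hs, ?_⟩
  rw [critParam, div_eq_iff (mul_ne_zero two_ne_zero hs)]
  linear_combination h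

theorem analyticOnNhd_critParam (hH : Differentiable ℂ H) :
    AnalyticOnNhd ℂ (critParam H) {z | sin z ≠ 0} := by
  intro z hz
  have hH' : Differentiable ℂ (deriv H) := fun w => (hH.analyticAt w).deriv.differentiableAt
  exact (Differentiable.analyticAt (by fun_prop) z).div
    (Differentiable.analyticAt (by fun_prop) z) (mul_ne_zero two_ne_zero hz)

/-- Envelope identity: the `z`-derivative of `cosFamily H a` vanishes at `a = critParam H z`, so
only the `a`-derivative `2 cos z` contributes. -/
theorem hasDerivAt_critValue (hH : Differentiable ℂ H) {z : ℂ} (hz : sin z ≠ 0) :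
    HasDerivAt (critValue H) (2 * cos z * deriv (critParam H) z) z := by
  have hM := (analyticOnNhd_critParam hH z hz).differentiableAt.hasDerivAt
  have hk : 2 * critParam H z * sin z = cos z ^ 2 * deriv H (sin z) - sin z * H (sin z) := by
    rw [critParam]
    field_simp
  exact ((hasDerivAt_cos z).mul
    (((hH _).hasDerivAt.comp z (hasDerivAt_sin z)).add (hM.const_mul 2))).congr_deriv
    (by simp only [Pi.add_apply, Function.comp_apply]; linear_combination -hk)

theorem hasStrictDerivAt_critValue (hH : Differentiable ℂ H) {z : ℂ} (hz : sin z ≠ 0) :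
    HasStrictDerivAt (critValue H) (2 * cos z * deriv (critParam H) z) z := by
  have hV : AnalyticAt ℂ (critValue H) z :=
    analyticAt_cos.mul (((hH.analyticAt _).comp analyticAt_sin).add
      (analyticAt_const.mul (analyticOnNhd_critParam hH z hz)))
  simpa only [(hasDerivAt_critValue hH hz).deriv] using hV.hasStrictDerivAt

end

theorem stmt4_general (H : ℂ → ℂ) (hH : Differentiable ℂ H)
    (hd0 : deriv H 0 ≠ 0) :
    ∃ E : Set ℂ, E.Countable ∧
      ∀ a : ℂ, a ∉ E → ∀ c : ℂ, ∀ z₁ z₂ : ℂ,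
        Complex.cos z₁ * (H (Complex.sin z₁) + 2 * a) = c →
        deriv (fun w => Complex.cos w * (H (Complex.sin w) + 2 * a)) z₁ = 0 →
        Complex.cos z₂ * (H (Complex.sin z₂) + 2 * a) = c →
        deriv (fun w => Complex.cos w * (H (Complex.sin w) + 2 * a)) z₂ = 0 →
        Complex.cos z₁ = Complex.cos z₂ := by
  have hM := analyticOnNhd_critParam hH
  have hcritValues := countable_image_setOf_deriv_eq_zero
    (isOpen_ne_fun continuous_sin continuous_const) hM
  have hpairs := countable_setOf_eq_eq_of_mul_ne_mul (f' := deriv (critParam H))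
    (g' := fun z => 2 * cos z * deriv (critParam H) z)
    (fun z hz => (hM z hz).hasStrictDerivAt) (fun z hz => hasStrictDerivAt_critValue hH hz)
  refine ⟨_, hcritValues.union (hpairs.image fun p => critParam H p.1), ?_⟩
  intro a ha c z₁ z₂ hc₁ hcrit₁ hc₂ hcrit₂
  obtain ⟨hs₁, hM₁⟩ := sin_ne_zero_and_critParam_eq hH hd0 hcrit₁
  obtain ⟨hs₂, hM₂⟩ := sin_ne_zero_and_critParam_eq hH hd0 hcrit₂
  by_contra hcos
  have hd₁ : deriv (critParam H) z₁ ≠ 0 := fun hd => ha (Or.inl ⟨z₁, ⟨hs₁, hd⟩, hM₁⟩)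
  have hd₂ : deriv (critParam H) z₂ ≠ 0 := fun hd => ha (Or.inl ⟨z₂, ⟨hs₂, hd⟩, hM₂⟩)
  have hV : critValue H z₁ = critValue H z₂ := by
    rw [critValue, critValue, hM₁, hM₂]
    exact hc₁.trans hc₂.symm
  refine ha (Or.inr ⟨(z₁, z₂), ⟨hs₁, hs₂, hM₁.trans hM₂.symm, hV, fun hdet => hcos ?_⟩, hM₁⟩)
  have : 2 * deriv (critParam H) z₁ * deriv (critParam H) z₂ * (cos z₁ - cos z₂) = 0 := by
    linear_combination -hdet
  simpa [hd₁, hd₂, sub_eq_zero] using this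

/-- Let H be a transcendental entire function, odd, with H′(0) ≠ 0,
such that z ↦ H(sin z) has finite order. For a ∈ ℂ put
H_a(z) := cos z · (H(sin z) + 2a). Then there is an at most countable set E ⊂ ℂ
such that for every a ∉ E, every c ∈ ℂ, and any two points z₁, z₂ with
H_a(z₁) = c, H_a′(z₁) = 0, H_a(z₂) = c, H_a′(z₂) = 0, one has cos z₁ = cos z₂. -/
theorem stmt4 (H : ℂ → ℂ) (hH : Differentiable ℂ H)
    (htrans : ∀ p : Polynomial ℂ, H ≠ fun z => p.eval z)
    (hodd : ∀ z : ℂ, H (-z) = -H z)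
    (hd0 : deriv H 0 ≠ 0)
    (horder : ∃ C ρ : ℝ, 0 < C ∧ 0 < ρ ∧
      ∀ z : ℂ, ‖H (Complex.sin z)‖ ≤ C * Real.exp (‖z‖ ^ ρ)) :
    ∃ E : Set ℂ, E.Countable ∧
      ∀ a : ℂ, a ∉ E → ∀ c : ℂ, ∀ z₁ z₂ : ℂ,
        Complex.cos z₁ * (H (Complex.sin z₁) + 2 * a) = c →
        deriv (fun w => Complex.cos w * (H (Complex.sin w) + 2 * a)) z₁ = 0 →
        Complex.cos z₂ * (H (Complex.sin z₂) + 2 * a) = c →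
        deriv (fun w => Complex.cos w * (H (Complex.sin w) + 2 * a)) z₂ = 0 →
        Complex.cos z₁ = Complex.cos z₂ :=
  stmt4_general H hH hd0
end

section
/- Let H be a transcendental entire function with H(−z) = −H(z) for all z, H′(0) ≠ 0, and such that the entire function z ↦ H(sin z) has finite order. For a ∈ ℂ put H_a(z) := cos z · (H(sin z) + 2a). Then there exists an at most countable set E ⊂ ℂ such that for every a ∈ ℂ \ E the derivative H_a′ has only simple zeros; that is, for every z with H_a′(z) = 0 one has H_a″(z) ≠ 0. -/
/-!
Write `g = H ∘ sin` and `f_c = cos * (g + c)`. At a multiple critical point `z` of `f_c`,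
eliminating `c` from `f_c' z = f_c'' z = 0` shows that `z` is a zero of an entire function
independent of `c` whose value at `0` is `-H'(0) ≠ 0`; such zeros form a countable set.
Moreover `sin z ≠ 0` there (again because `H'(0) ≠ 0`), so `f_c' z = 0` determines `c` from `z`.
-/

open Complex Filter

theorem Differentiable.countable_preimage_zero {E : Type*} [NormedAddCommGroup E]
    [NormedSpace ℂ E] [CompleteSpace E] {f : ℂ → E} (hf : Differentiable ℂ f) {z₀ : ℂ}
    (h : f z₀ ≠ 0) : (f ⁻¹' {0}).Countable := by
  have hcodiscrete : (f ⁻¹' {0})ᶜ ∈ codiscrete ℂ :=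
    AnalyticOnNhd.preimage_zero_mem_codiscrete (fun z _ => hf.analyticAt z) h
  simpa using (HereditarilyLindelofSpace.isLindelof _).countable_of_isDiscrete
    (isDiscrete_of_codiscreteWithin hcodiscrete)

section CosMulAdd

variable {g : ℂ → ℂ}

theorem hasDerivAt_cos_mul_add {z : ℂ} (hg : DifferentiableAt ℂ g z) (c : ℂ) :
    HasDerivAt (fun w => cos w * (g w + c)) (-sin z * (g z + c) + cos z * deriv g z) z :=
  neg_mul (sin z) _ ▸ (hasDerivAt_cos z).mul (hg.hasDerivAt.add_const c)

theorem deriv_cos_mul_add (hg : Differentiable ℂ g) (c : ℂ) :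
    deriv (fun w => cos w * (g w + c)) = fun w => -sin w * (g w + c) + cos w * deriv g w :=
  funext fun z => (hasDerivAt_cos_mul_add (hg z) c).deriv

theorem deriv_deriv_cos_mul_add (hg : Differentiable ℂ g) (c z : ℂ) :
    deriv (deriv fun w => cos w * (g w + c)) z =
      -cos z * (g z + c) - 2 * sin z * deriv g z + cos z * deriv (deriv g) z := by
  rw [deriv_cos_mul_add hg]
  have h : HasDerivAt (fun w => -sin w * (g w + c) + cos w * deriv g w)
      (-cos z * (g z + c) + -sin z * deriv g z + (-sin z * deriv g z + cos z * deriv (deriv g) z))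
      z :=
    ((hasDerivAt_sin z).neg.mul ((hg z).hasDerivAt.add_const c)).add
      ((hasDerivAt_cos z).mul (hg.deriv z).hasDerivAt)
  rw [h.deriv]
  ring

/-- Eliminating `c` from `f_c' z = 0` and `f_c'' z = 0`, where `f_c w = cos w * (g w + c)`. -/
noncomputable def cosMulAddEliminant (g : ℂ → ℂ) (z : ℂ) : ℂ :=
  -(1 + sin z ^ 2) * deriv g z + sin z * cos z * deriv (deriv g) z

theorem cosMulAddEliminant_zero : cosMulAddEliminant g 0 = -deriv g 0 := by
  simp [cosMulAddEliminant]

theorem Differentiable.cosMulAddEliminant (hg : Differentiable ℂ g) :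
    Differentiable ℂ (cosMulAddEliminant g) := by
  unfold _root_.cosMulAddEliminant
  have := hg.deriv
  have := hg.deriv.deriv
  fun_prop

theorem cosMulAddEliminant_eq_zero (hg : Differentiable ℂ g) {c z : ℂ}
    (h₁ : deriv (fun w => cos w * (g w + c)) z = 0)
    (h₂ : deriv (deriv fun w => cos w * (g w + c)) z = 0) :
    cosMulAddEliminant g z = 0 := by
  rw [deriv_cos_mul_add hg] at h₁
  rw [deriv_deriv_cos_mul_add hg] at h₂
  unfold cosMulAddEliminant
  linear_combination sin z * h₂ - cos z * h₁ + deriv g z * sin_sq_add_cos_sq z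

theorem eq_of_deriv_cos_mul_add_eq_zero (hg : Differentiable ℂ g) {c z : ℂ} (hz : sin z ≠ 0)
    (h : deriv (fun w => cos w * (g w + c)) z = 0) :
    c = cos z * deriv g z / sin z - g z := by
  rw [deriv_cos_mul_add hg] at h
  field_simp
  linear_combination -h

theorem sin_ne_zero_of_deriv_cos_mul_add_eq_zero (hg : Differentiable ℂ g)
    (hg' : ∀ z, sin z = 0 → deriv g z ≠ 0) {c z : ℂ}
    (h : deriv (fun w => cos w * (g w + c)) z = 0) : sin z ≠ 0 := by
  intro hz
  have hcos : cos z ^ 2 = 1 := by simpa [hz] using sin_sq_add_cos_sq z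
  rw [deriv_cos_mul_add hg] at h
  simp only [hz, neg_zero, zero_mul, zero_add, mul_eq_zero] at h
  rcases h with hc | hd
  · simp [hc] at hcos
  · exact hg' z hz hd

theorem countable_setOf_deriv_cos_mul_add_multiple_zero (hg : Differentiable ℂ g)
    (hg' : ∀ z, sin z = 0 → deriv g z ≠ 0) :
    {c : ℂ | ∃ z, deriv (fun w => cos w * (g w + c)) z = 0 ∧
      deriv (deriv fun w => cos w * (g w + c)) z = 0}.Countable := by
  have hzeros : (cosMulAddEliminant g ⁻¹' {0}).Countable :=
    hg.cosMulAddEliminant.countable_preimage_zero (z₀ := 0)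
      (by simpa [cosMulAddEliminant_zero] using hg' 0 sin_zero)
  refine (hzeros.image fun z => cos z * deriv g z / sin z - g z).mono ?_
  rintro c ⟨z, h₁, h₂⟩
  have hsin := sin_ne_zero_of_deriv_cos_mul_add_eq_zero hg hg' h₁
  exact ⟨z, cosMulAddEliminant_eq_zero hg h₁ h₂,
    (eq_of_deriv_cos_mul_add_eq_zero hg hsin h₁).symm⟩

end CosMulAdd

theorem deriv_comp_sin_ne_zero {H : ℂ → ℂ} (hH : Differentiable ℂ H) (hd0 : deriv H 0 ≠ 0)
    {z : ℂ} (hz : sin z = 0) : deriv (fun w => H (sin w)) z ≠ 0 := by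
  have hcos : cos z ≠ 0 := fun hc => by simpa [hz, hc] using sin_sq_add_cos_sq z
  have h : HasDerivAt (fun w => H (sin w)) (deriv H (sin z) * cos z) z :=
    (hH (sin z)).hasDerivAt.comp z (hasDerivAt_sin z)
  rw [h.deriv, hz]
  exact mul_ne_zero hd0 hcos

theorem stmt5_general (H : ℂ → ℂ) (hH : Differentiable ℂ H)
    (hd0 : deriv H 0 ≠ 0) :
    ∃ E : Set ℂ, E.Countable ∧
      ∀ a : ℂ, a ∉ E → ∀ z : ℂ,
        deriv (fun w => Complex.cos w * (H (Complex.sin w) + 2 * a)) z = 0 →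
        deriv (deriv (fun w => Complex.cos w * (H (Complex.sin w) + 2 * a))) z ≠ 0 := by
  have hbad := countable_setOf_deriv_cos_mul_add_multiple_zero (hH.comp differentiable_sin)
    fun _ => deriv_comp_sin_ne_zero hH hd0
  refine ⟨(2 * ·) ⁻¹' _, hbad.preimage (mul_right_injective₀ two_ne_zero), ?_⟩
  intro a ha z h₁ h₂
  exact ha ⟨z, h₁, h₂⟩

/-- Let H be a transcendental entire function, odd, with H′(0) ≠ 0,
such that z ↦ H(sin z) has finite order. For a ∈ ℂ put
H_a(z) := cos z · (H(sin z) + 2a). Then there is an at most countable set E ⊂ ℂ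
such that for every a ∉ E the derivative H_a′ has only simple zeros. -/
theorem stmt5 (H : ℂ → ℂ) (hH : Differentiable ℂ H)
    (htrans : ∀ p : Polynomial ℂ, H ≠ fun z => p.eval z)
    (hodd : ∀ z : ℂ, H (-z) = -H z)
    (hd0 : deriv H 0 ≠ 0)
    (horder : ∃ C ρ : ℝ, 0 < C ∧ 0 < ρ ∧
      ∀ z : ℂ, ‖H (Complex.sin z)‖ ≤ C * Real.exp (‖z‖ ^ ρ)) :
    ∃ E : Set ℂ, E.Countable ∧
      ∀ a : ℂ, a ∉ E → ∀ z : ℂ,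
        deriv (fun w => Complex.cos w * (H (Complex.sin w) + 2 * a)) z = 0 →
        deriv (deriv (fun w => Complex.cos w * (H (Complex.sin w) + 2 * a))) z ≠ 0 :=
  stmt5_general H hH hd0
end
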